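/- The function h_t(v) = C (n(v)+1)^{-1/4} (2t)^{(n(v)+x(v))/2} / √((n(v)+x(v)-1)!) on words over the alphabet {1,...,d} (with letter 1 distinguished, n(v) the word length, x(v) the number of 1s, C ≥ 2 a constant, t > 0) satisfies h_t(uv) ≤ h_t(u)·h_t(v) for all words u, v, where uv denotes concatenation. -/

import Mathlib

open scoped BigOperators

/-- Words over the alphabet `Fin d`. -/
abbrev Word (d : ℕ) := List (Fin d)

/-- The extended tensor algebra over `ℝ^d`, viewed as coefficient functions on words. -/
abbrev ETA (d : ℕ) := Word d → ℝ

namespace ETA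

variable {d : ℕ}

/-- The unit (empty word) element `∅`. -/
noncomputable def unit (d : ℕ) : ETA d := fun v => if v = [] then 1 else 0

/-- Concatenation (tensor) product. -/
noncomputable def concat (p q : ETA d) : ETA d :=
  fun v => ∑ k ∈ Finset.range (v.length + 1), p (v.take k) * q (v.drop k)

/-- Concatenation powers. -/
noncomputable def cpow (p : ETA d) : ℕ → ETA d
  | 0 => unit d
  | n + 1 => concat (cpow p n) p

/-- Shuffle product of two words as a multiset of words. -/
def shuffleW {A : Type*} : List A → List A → Multiset (List A)
  | [], w => {w}
  | u, [] => {u}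
  | a :: u, b :: w =>
      (shuffleW u (b :: w)).map (a :: ·) + (shuffleW (a :: u) w).map (b :: ·)
  termination_by u w => u.length + w.length
  decreasing_by all_goals (simp only [List.length_cons]; omega)

/-- The finset of all words of length `n` over `Fin d`. -/
noncomputable def wordsLen (d n : ℕ) : Finset (Word d) :=
  Finset.image (fun f : Fin n → Fin d => List.ofFn f) Finset.univ

/-- Shuffle product on the extended tensor algebra (coefficient-wise finite sums). -/
noncomputable def shuffle (p q : ETA d) : ETA d :=
  fun v => ∑ k ∈ Finset.range (v.length + 1),
    ∑ u ∈ wordsLen d k, ∑ w ∈ wordsLen d (v.length - k),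
      p u * q w * ((shuffleW u w).count v : ℝ)

/-- Shuffle powers. -/
noncomputable def spow (p : ETA d) : ℕ → ETA d
  | 0 => unit d
  | n + 1 => shuffle (spow p n) p

/-- A linear combination of single letters `Σ_i c i • e_i`. -/
def letters (c : Fin d → ℝ) : ETA d := fun v =>
  match v with
  | [i] => c i
  | _ => 0

/-- A single letter `e_i`. -/
noncomputable def letter (i : Fin d) : ETA d := fun v => if v = [i] then 1 else 0

/-- The resolvent `(∅ - q)⁻¹ = Σ_n q^{⊗n}`, defined coefficient-wise. -/
noncomputable def res (q : ETA d) : ETA d := fun v => ∑' n, cpow q n v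

/-- The shuffle exponential `exp^⧢(b) = Σ_n b^{⧢n}/n!`, defined coefficient-wise. -/
noncomputable def shuexp (b : ETA d) : ETA d := fun v => ∑' n, spow b n v / (Nat.factorial n : ℝ)

/-- Right projection `ℓ|_i`, removing a terminal letter `i`. -/
def proj (p : ETA d) (i : Fin d) : ETA d := fun v => p (v ++ [i])

end ETA

/-- The dominating function `h_t(v) = C (n+1)^{-1/4} (2t)^{(n+x)/2} / √((n+x-1)!)`,
where `n` is the length of `v` and `x` the number of occurrences of the distinguished
letter `0` (the time letter), with the convention `m! = 1` for `m ≤ 0`. -/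
noncomputable def hfun {d : ℕ} [NeZero d] (C t : ℝ) (v : Word d) : ℝ :=
  C * ((v.length : ℝ) + 1) ^ (-(1/4 : ℝ)) *
    (2 * t) ^ (((v.length + v.count 0 : ℕ) : ℝ) / 2) /
      Real.sqrt (Nat.factorial (v.length + v.count 0 - 1))

/-!
Write `h_t(v) = C (2t)^{(n+x)/2} D(v)^{-1/4}` with `D(v) = (n+1) ((n+x-1)!)²`. The power of `2t`
is multiplicative, so it suffices that `D(u) D(v) ≤ 4 D(uv) ≤ C⁴ D(uv)`. Since a binomial coefficient
is at least `1`, `m! (k-1)! ≤ (m+k-1)!`; using this once for each of `u` and `v` bounds the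
factorial part, and `n + 1 ≤ 2 (n + x)` for nonempty words absorbs the length factors into the `4`.
-/

namespace Nat

theorem factorial_mul_factorial_pred_le (m : ℕ) {n : ℕ} (hn : 1 ≤ n) :
    m ! * (n - 1)! ≤ (m + n - 1)! := by
  have h := le_of_dvd (factorial_pos _) (factorial_mul_factorial_dvd_factorial_add m (n - 1))
  rwa [← Nat.add_sub_assoc hn] at h

theorem succ_mul_factorial_pred_sq_mul_le {a b m n : ℕ} (ha : a ≤ m) (hb : b ≤ n) :
    (a + 1) * (m - 1)! ^ 2 * ((b + 1) * (n - 1)! ^ 2) ≤ 4 * ((a + b + 1) * (m + n - 1)! ^ 2) := by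
  rcases eq_zero_or_pos m with rfl | hm
  · obtain rfl : a = 0 := by omega
    simp only [zero_add, Nat.zero_sub, factorial_zero, one_pow, one_mul]
    omega
  rcases eq_zero_or_pos n with rfl | hn
  · obtain rfl : b = 0 := by omega
    simp only [add_zero, Nat.zero_sub, factorial_zero, one_pow, mul_one]
    omega
  have hlength : (a + 1) * (b + 1) ≤ 4 * (m * n) := by
    have : a + 1 ≤ 2 * m := by omega
    have : b + 1 ≤ 2 * n := by omega
    nlinarith
  have hfactorial : m * n * ((m - 1)! * (n - 1)!) ^ 2 ≤ (m + n - 1)! ^ 2 := by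
    have hmn := factorial_mul_factorial_pred_le m hn
    have hnm := factorial_mul_factorial_pred_le n hm
    rw [← mul_factorial_pred hm.ne'] at hmn
    rw [← mul_factorial_pred hn.ne', add_comm n m] at hnm
    calc m * n * ((m - 1)! * (n - 1)!) ^ 2
        = m * (m - 1)! * (n - 1)! * (n * (n - 1)! * (m - 1)!) := by ring
      _ ≤ (m + n - 1)! * (m + n - 1)! := Nat.mul_le_mul hmn hnm
      _ = (m + n - 1)! ^ 2 := (sq _).symm
  calc (a + 1) * (m - 1)! ^ 2 * ((b + 1) * (n - 1)! ^ 2)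
      = (a + 1) * (b + 1) * ((m - 1)! * (n - 1)!) ^ 2 := by ring
    _ ≤ 4 * (m * n) * ((m - 1)! * (n - 1)!) ^ 2 := Nat.mul_le_mul_right _ hlength
    _ ≤ 4 * (m + n - 1)! ^ 2 := by rw [mul_assoc]; exact Nat.mul_le_mul_left _ hfactorial
    _ ≤ 4 * ((a + b + 1) * (m + n - 1)! ^ 2) :=
        Nat.mul_le_mul_left _ (Nat.le_mul_of_pos_left _ (succ_pos _))

end Nat

theorem Real.mul_rpow_neg_quarter_le {C x y : ℝ} (hC : 0 < C) (hx : 0 < x) (h : x ≤ C ^ 4 * y) :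
    C * y ^ (-(1 / 4 : ℝ)) ≤ C * C * x ^ (-(1 / 4 : ℝ)) := by
  have hy : x / C ^ 4 ≤ y := by rwa [div_le_iff₀' (by positivity)]
  have hquarter : (C ^ 4) ^ (-(1 / 4 : ℝ)) = C⁻¹ := by
    rw [← Real.rpow_natCast, ← Real.rpow_mul hC.le]
    norm_num [Real.rpow_neg_one]
  calc C * y ^ (-(1 / 4 : ℝ)) ≤ C * (x / C ^ 4) ^ (-(1 / 4 : ℝ)) :=
        mul_le_mul_of_nonneg_left (Real.rpow_le_rpow_of_nonpos (by positivity) hy (by norm_num))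
          hC.le
    _ = C * C * x ^ (-(1 / 4 : ℝ)) := by
        rw [Real.div_rpow hx.le (by positivity), hquarter]
        field_simp

namespace Word

variable {d : ℕ} [NeZero d]

def weight (v : Word d) : ℕ := v.length + v.count 0

theorem length_le_weight (v : Word d) : v.length ≤ v.weight := Nat.le_add_right _ _

theorem weight_append (u v : Word d) : (u ++ v).weight = u.weight + v.weight := by
  simp only [weight, List.length_append, List.count_append]
  omega

end Word

section Denominator

open Nat

variable {d : ℕ} [NeZero d]

def hfunDenom (v : Word d) : ℕ := (v.length + 1) * (v.weight - 1)! ^ 2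

theorem hfunDenom_pos (v : Word d) : 0 < hfunDenom v := by
  unfold hfunDenom
  positivity

theorem hfunDenom_mul_le (u v : Word d) : hfunDenom u * hfunDenom v ≤ 4 * hfunDenom (u ++ v) := by
  rw [hfunDenom, hfunDenom, hfunDenom, Word.weight_append, List.length_append]
  exact succ_mul_factorial_pred_sq_mul_le u.length_le_weight v.length_le_weight

theorem hfun_eq (C t : ℝ) (v : Word d) :
    hfun C t v = C * (2 * t) ^ ((v.weight : ℝ) / 2) * (hfunDenom v : ℝ) ^ (-(1 / 4 : ℝ)) := by
  have hF : (0 : ℝ) ≤ (v.weight - 1)! := Nat.cast_nonneg _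
  have hsqrt : (((v.weight - 1)! : ℝ) ^ 2) ^ (-(1 / 4 : ℝ)) = (√((v.weight - 1)! : ℝ))⁻¹ := by
    rw [Real.sqrt_eq_rpow, ← Real.rpow_natCast, ← Real.rpow_mul hF, ← Real.rpow_neg hF]
    norm_num
  rw [hfunDenom, Nat.cast_mul, Nat.cast_pow, Real.mul_rpow (Nat.cast_nonneg _) (by positivity),
    hsqrt]
  simp only [hfun, Word.weight]
  push_cast
  ring

end Denominator

/-- Sub-multiplicativity of `h` under concatenation of words. -/
theorem hfun_submultiplicative (d : ℕ) [NeZero d] (C t : ℝ) (hC : 2 ≤ C) (ht : 0 < t)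
    (u v : Word d) :
    hfun C t (u ++ v) ≤ hfun C t u * hfun C t v := by
  have hpos : (0 : ℝ) < hfunDenom u * hfunDenom v := by
    exact_mod_cast Nat.mul_pos (hfunDenom_pos u) (hfunDenom_pos v)
  have hdenom : (hfunDenom u * hfunDenom v : ℝ) ≤ C ^ 4 * hfunDenom (u ++ v) := by
    have h4C : (4 : ℝ) ≤ C ^ 4 := by nlinarith [pow_le_pow_left₀ zero_le_two hC 4]
    calc (hfunDenom u * hfunDenom v : ℝ) ≤ 4 * hfunDenom (u ++ v) := by
          exact_mod_cast hfunDenom_mul_le u v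
      _ ≤ C ^ 4 * hfunDenom (u ++ v) := by gcongr
  rw [hfun_eq C t (u ++ v), Word.weight_append, Nat.cast_add, add_div,
    Real.rpow_add (by linarith)]
  calc C * ((2 * t) ^ ((u.weight : ℝ) / 2) * (2 * t) ^ ((v.weight : ℝ) / 2)) *
        (hfunDenom (u ++ v) : ℝ) ^ (-(1 / 4 : ℝ))
      ≤ (2 * t) ^ ((u.weight : ℝ) / 2) * (2 * t) ^ ((v.weight : ℝ) / 2) *
        (C * C * (hfunDenom u * hfunDenom v : ℝ) ^ (-(1 / 4 : ℝ))) := by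
        rw [mul_comm C, mul_assoc]
        exact mul_le_mul_of_nonneg_left
          (Real.mul_rpow_neg_quarter_le (by linarith) hpos hdenom) (by positivity)
    _ = hfun C t u * hfun C t v := by
        rw [hfun_eq, hfun_eq, Real.mul_rpow (Nat.cast_nonneg _) (Nat.cast_nonneg _)]
        ring
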